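/- arXiv:1505.04304 — 2 statements merged into one kernel-verified Lean document; each statement's English description precedes it below -/
import Mathlib

section
/- If the pseudo MV-algebra M = Γ(G,u) is strongly projectable, then M is a pseudocomplemented lattice: for every a ∈ M there exists a Boolean element b ∈ M such that, for all x ∈ M, x ∧ a = 0 if and only if x ≤ b. -/
variable {G : Type*} [Lattice G] [AddGroup G]
  [CovariantClass G G (· + ·) (· ≤ ·)]
  [CovariantClass G G (Function.swap (· + ·)) (· ≤ ·)]

/-- `u` is a strong unit of the lattice-ordered group `G`. -/
def IsStrongUnit (u : G) : Prop := 0 ≤ u ∧ ∀ x : G, ∃ n : ℕ, x ≤ n • u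

/-- The operation `x ⊕ y := (x + y) ⊓ u` of the pseudo MV-algebra `Γ(G,u)`. -/
def oplus (u x y : G) : G := (x + y) ⊓ u

/-- The operation `x ⊙ y := (x - u + y) ⊔ 0` of the pseudo MV-algebra `Γ(G,u)`. -/
def odot (u x y : G) : G := (x - u + y) ⊔ 0

/-- `n.x := x ⊕ ⋯ ⊕ x` (`n` summands), with `0.x = 0`. -/
def nOplus (u : G) : ℕ → G → G
  | 0, _ => 0
  | n + 1, x => oplus u (nOplus u n x) x

/-- `I` is an ideal of the pseudo MV-algebra with carrier `C ⊆ Γ(G,u)`: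
a nonempty subset of `C`, downward closed within `C`, and closed under `⊕`. -/
def IsIdealIn (u : G) (C I : Set G) : Prop :=
  I ⊆ C ∧ I.Nonempty ∧ (∀ x ∈ I, ∀ y ∈ C, y ≤ x → y ∈ I) ∧
    ∀ x ∈ I, ∀ y ∈ I, oplus u x y ∈ I

/-- `I` is a normal ideal: `x ⊕ I = I ⊕ x` for all `x ∈ C`. -/
def IsNormalIdealIn (u : G) (C I : Set G) : Prop :=
  IsIdealIn u C I ∧ ∀ x ∈ C, (fun i => oplus u x i) '' I = (fun i => oplus u i x) '' I

/-- `⟨X⟩_n`, the smallest normal ideal (of the carrier `C`) containing `X`. -/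
def normalGenIn (u : G) (C X : Set G) : Set G :=
  ⋂₀ {I | IsNormalIdealIn u C I ∧ X ⊆ I}

/-- The polar `X^⊥ = {y ∈ C : y ∧ x = 0 for all x ∈ X}` computed in carrier `C`. -/
def polarIn (C X : Set G) : Set G := {y ∈ C | ∀ x ∈ X, y ⊓ x = 0}

/-- `A ⊕ B := {a ⊕ b : a ∈ A, b ∈ B}`. -/
def setOplus (u : G) (A B : Set G) : Set G := Set.image2 (oplus u) A B

/-- `↓a` computed within the carrier `C`. -/
def dsetIn (C : Set G) (a : G) : Set G := {x ∈ C | x ≤ a}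

/-- `I` is a summand-ideal of the carrier `C`: a normal ideal such that for
some normal ideal `J`, `I ∩ J = {0}` and `⟨I ∪ J⟩_n = C`. -/
def IsSummandIdealIn (u : G) (C I : Set G) : Prop :=
  IsNormalIdealIn u C I ∧ ∃ J, IsNormalIdealIn u C J ∧ I ∩ J = {0} ∧
    normalGenIn u C (I ∪ J) = C

/-- `I` is a polar ideal of the carrier `C`: `I = I^⊥⊥`. -/
def IsPolarIdealIn (C I : Set G) : Prop := polarIn C (polarIn C I) = I

/-- `a` is a Boolean element of the carrier `C`: `a ∈ C` and `a ⊕ a = a`. -/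
def IsBooleanIn (u : G) (C : Set G) (a : G) : Prop := a ∈ C ∧ oplus u a a = a

/-- The carrier `C` is strongly projectable: every polar ideal is a summand-ideal. -/
def IsStronglyProjectableIn (u : G) (C : Set G) : Prop :=
  ∀ I : Set G, IsPolarIdealIn C I → IsSummandIdealIn u C I

/-- `N` is a subalgebra of `Γ(G,u)`: contains `0` and `u`, closed under `⊕`,
`x⁻ = u - x` and `x∼ = -x + u`. -/
def IsSubalg (u : G) (N : Set G) : Prop :=
  N ⊆ Set.Icc 0 u ∧ 0 ∈ N ∧ u ∈ N ∧
    (∀ x ∈ N, ∀ y ∈ N, oplus u x y ∈ N) ∧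
    (∀ x ∈ N, u - x ∈ N) ∧ (∀ x ∈ N, -x + u ∈ N)

/-- `N` is a large subalgebra of `Γ(G,u)`: for every nonzero `y ∈ Γ(G,u)` there
are `n ∈ ℕ` and a nonzero `x ∈ N` with `x ≤ n.y`. -/
def IsLargeSubalg (u : G) (N : Set G) : Prop :=
  IsSubalg u N ∧ ∀ y ∈ Set.Icc (0 : G) u, y ≠ 0 →
    ∃ n : ℕ, ∃ x ∈ N, x ≠ 0 ∧ x ≤ nOplus u n y


/-!
Write `I = a^⊥`, a polar ideal, and let `J` be a normal ideal with `I ∩ J = {0}` and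
`⟨I ∪ J⟩_n = M`. For normal ideals `I`, `J` the set of elements of `M` lying below some `p ⊕ q`
(`p ∈ I`, `q ∈ J`) is already a normal ideal, so `u ≤ p ⊕ q ≤ p + q` for some such `p`, `q`.
Then `b = u - q ≤ p` lies in `I`, `b ∧ q = 0` and `b + q = u`, which makes `b` Boolean; and
every `x ∈ I` is disjoint from `q`, hence `x ≤ b`.
-/

open Set

section Polar

variable {α : Type*} [Lattice α] [AddGroup α] {C X Y : Set α}

lemma polarIn_anti (h : X ⊆ Y) : polarIn C Y ⊆ polarIn C X :=
  fun _ hy => ⟨hy.1, fun x hx => hy.2 x (h hx)⟩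

lemma subset_polarIn_polarIn (hX : X ⊆ C) : X ⊆ polarIn C (polarIn C X) :=
  fun x hx => ⟨hX hx, fun _ hy => by rw [inf_comm]; exact hy.2 x hx⟩

lemma isPolarIdealIn_polarIn (hX : X ⊆ C) : IsPolarIdealIn C (polarIn C X) :=
  (polarIn_anti (subset_polarIn_polarIn hX)).antisymm (subset_polarIn_polarIn fun _ hy => hy.1)

lemma mem_polarIn_singleton {a x : α} : x ∈ polarIn C {a} ↔ x ∈ C ∧ x ⊓ a = 0 := by
  simp [polarIn]

end Polar

section Ideal

variable {α : Type*} [Lattice α] [AddGroup α] {u : α} {C I J X : Set α}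

lemma IsIdealIn.mem_of_le (hI : IsIdealIn u C I) {x y : α} (hx : x ∈ I) (hy : y ∈ C)
    (hyx : y ≤ x) : y ∈ I :=
  hI.2.2.1 x hx y hy hyx

lemma IsIdealIn.zero_mem (hI : IsIdealIn u (Icc 0 u) I) : 0 ∈ I := by
  obtain ⟨x, hx⟩ := hI.2.1
  exact hI.mem_of_le hx ⟨le_rfl, (hI.1 hx).1.trans (hI.1 hx).2⟩ (hI.1 hx).1

lemma IsIdealIn.inf_eq_zero_of_inter_eq (hI : IsIdealIn u (Icc 0 u) I)
    (hJ : IsIdealIn u (Icc 0 u) J) (hIJ : I ∩ J = {0}) {x y : α} (hx : x ∈ I) (hy : y ∈ J) :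
    x ⊓ y = 0 := by
  have hxy : x ⊓ y ∈ Icc 0 u := ⟨le_inf (hI.1 hx).1 (hJ.1 hy).1, inf_le_left.trans (hI.1 hx).2⟩
  have : x ⊓ y ∈ I ∩ J := ⟨hI.mem_of_le hx hxy inf_le_left, hJ.mem_of_le hy hxy inf_le_right⟩
  rwa [hIJ] at this

lemma normalGenIn_subset {K : Set α} (hK : IsNormalIdealIn u C K) (hXK : X ⊆ K) :
    normalGenIn u C X ⊆ K :=
  sInter_subset_of_mem ⟨hK, hXK⟩

end Ideal

section Oplus

variable {α : Type*} [Lattice α] [AddGroup α] [AddLeftMono α] {u : α}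

lemma oplus_self_eq_of_add_eq {b q : α} (hbq : b + q = u) (h : b ⊓ q = 0) : oplus u b b = b := by
  rw [oplus, ← hbq, ← add_inf, h, add_zero]

lemma oplus_mem_Icc {x y : α} (hu : 0 ≤ u) (hx : 0 ≤ x) (hy : 0 ≤ y) : oplus u x y ∈ Icc 0 u :=
  ⟨le_inf (add_nonneg hx hy) hu, inf_le_right⟩

variable [AddRightMono α]

lemma oplus_le_oplus {x x' y y' : α} (hx : x ≤ x') (hy : y ≤ y') :
    oplus u x y ≤ oplus u x' y' :=
  inf_le_inf_right u (add_le_add hx hy)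

lemma oplus_assoc {x y z : α} (hx : 0 ≤ x) (hz : 0 ≤ z) :
    oplus u (oplus u x y) z = oplus u x (oplus u y z) := by
  unfold oplus
  rw [inf_add, add_inf, ← add_assoc, inf_assoc, inf_assoc,
    inf_eq_right.mpr (le_add_of_nonneg_right hz), inf_eq_right.mpr (le_add_of_nonneg_left hx)]

lemma inf_add_le_inf_add_inf {a b c : α} (ha : 0 ≤ a) (hb : 0 ≤ b) (hc : 0 ≤ c) :
    a ⊓ (b + c) ≤ a ⊓ b + a ⊓ c := by
  rw [add_inf, inf_add, inf_add]
  refine le_inf (le_inf ?_ ?_) (le_inf ?_ inf_le_right)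
  · exact inf_le_left.trans (le_add_of_nonneg_right ha)
  · exact inf_le_left.trans (le_add_of_nonneg_left hb)
  · exact inf_le_left.trans (le_add_of_nonneg_right hc)

lemma le_sub_of_inf_eq_zero {x q : α} (hx : x ≤ u) (hq : q ≤ u) (hxq : x ⊓ q = 0) :
    x ≤ u - q :=
  calc x = x ⊓ (u - q + q) := by rw [sub_add_cancel, inf_eq_left.mpr hx]
    _ ≤ x ⊓ (u - q) + x ⊓ q :=
      inf_add_le_inf_add_inf (hxq ▸ inf_le_left) (sub_nonneg.mpr hq) (hxq ▸ inf_le_right)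
    _ ≤ u - q := by rw [hxq, add_zero]; exact inf_le_right

end Oplus

section NormalIdealSum

variable {α : Type*} [Lattice α] [AddGroup α] [AddLeftMono α] [AddRightMono α] {u : α}

lemma exists_oplus_right_eq_of_le {x k y : α} (hx : x ∈ Icc 0 u) (hk : 0 ≤ k)
    (hle : oplus u x k ≤ oplus u y x) : ∃ k' ∈ Icc 0 u, k' ≤ y ∧ oplus u k' x = oplus u x k := by
  have hxk : x ≤ oplus u x k := le_inf (le_add_of_nonneg_right hk) hx.2
  refine ⟨oplus u x k - x, ⟨sub_nonneg.mpr hxk, ?_⟩, ?_, ?_⟩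
  · exact sub_le_iff_le_add.mpr (inf_le_right.trans (le_add_of_nonneg_right hx.1))
  · exact sub_le_iff_le_add.mpr (hle.trans inf_le_left)
  · rw [oplus, sub_add_cancel]
    exact inf_eq_left.mpr inf_le_right

lemma exists_oplus_left_eq_of_le {x k y : α} (hx : x ∈ Icc 0 u) (hk : 0 ≤ k)
    (hle : oplus u k x ≤ oplus u x y) : ∃ k' ∈ Icc 0 u, k' ≤ y ∧ oplus u x k' = oplus u k x := by
  have hxk : x ≤ oplus u k x := le_inf (le_add_of_nonneg_left hk) hx.2
  refine ⟨-x + oplus u k x, ⟨le_neg_add_iff_add_le.mpr (by rwa [add_zero]), ?_⟩, ?_, ?_⟩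
  · exact neg_add_le_iff_le_add.mpr (inf_le_right.trans (le_add_of_nonneg_left hx.1))
  · exact neg_add_le_iff_le_add.mpr (hle.trans inf_le_left)
  · rw [oplus, add_neg_cancel_left]
    exact inf_eq_left.mpr inf_le_right

lemma isIdealIn_inter_lowerClosure {S : Set α} (hS : S ⊆ Icc 0 u) (hne : S.Nonempty)
    (hadd : ∀ s ∈ S, ∀ t ∈ S, oplus u s t ∈ S) :
    IsIdealIn u (Icc 0 u) (Icc 0 u ∩ lowerClosure S) := by
  obtain ⟨s, hs⟩ := hne
  have hu : 0 ≤ u := (hS hs).1.trans (hS hs).2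
  refine ⟨inter_subset_left, ⟨0, ⟨le_rfl, hu⟩, s, hs, (hS hs).1⟩, ?_, ?_⟩
  · rintro x ⟨-, hx⟩ y hy hyx
    exact ⟨hy, (lowerClosure S).lower hyx hx⟩
  · rintro x ⟨hx, s, hs, hxs⟩ y ⟨hy, t, ht, hyt⟩
    exact ⟨oplus_mem_Icc hu hx.1 hy.1, oplus u s t, hadd s hs t ht,
      oplus_le_oplus hxs hyt⟩

lemma image_oplus_inter_lowerClosure {S : Set α}
    (hS : ∀ x ∈ Icc 0 u, (oplus u x ·) '' S = (oplus u · x) '' S) {x : α} (hx : x ∈ Icc 0 u) :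
    (oplus u x ·) '' (Icc 0 u ∩ lowerClosure S) = (oplus u · x) '' (Icc 0 u ∩ lowerClosure S) := by
  apply Subset.antisymm
  · rintro _ ⟨k, ⟨hk, s, hs, hks⟩, rfl⟩
    obtain ⟨s', hs', he⟩ : oplus u x s ∈ (oplus u · x) '' S := hS x hx ▸ mem_image_of_mem _ hs
    obtain ⟨k', hk', hk's', he'⟩ :=
      exists_oplus_right_eq_of_le hx hk.1 ((oplus_le_oplus le_rfl hks).trans he.ge)
    exact ⟨k', ⟨hk', s', hs', hk's'⟩, he'⟩
  · rintro _ ⟨k, ⟨hk, s, hs, hks⟩, rfl⟩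
    obtain ⟨s', hs', he⟩ : oplus u s x ∈ (oplus u x ·) '' S :=
      (hS x hx).symm ▸ mem_image_of_mem _ hs
    obtain ⟨k', hk', hk's', he'⟩ :=
      exists_oplus_left_eq_of_le hx hk.1 ((oplus_le_oplus hks le_rfl).trans he.ge)
    exact ⟨k', ⟨hk', s', hs', hk's'⟩, he'⟩

variable {I J : Set α}

lemma image_oplus_setOplus (hI : IsNormalIdealIn u (Icc 0 u) I)
    (hJ : IsNormalIdealIn u (Icc 0 u) J) {x : α} (hx : x ∈ Icc 0 u) :
    (oplus u x ·) '' setOplus u I J = (oplus u · x) '' setOplus u I J := by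
  have hI0 : ∀ p ∈ I, 0 ≤ p := fun p hp => (hI.1.1 hp).1
  have hJ0 : ∀ q ∈ J, 0 ≤ q := fun q hq => (hJ.1.1 hq).1
  calc (oplus u x ·) '' image2 (oplus u) I J
      = image2 (fun p q => oplus u (oplus u x p) q) I J := by
        rw [image_image2]
        exact image2_congr fun p _ q hq => (oplus_assoc hx.1 (hJ0 q hq)).symm
    _ = image2 (oplus u) ((oplus u x ·) '' I) J := (image2_image_left _ _).symm
    _ = image2 (oplus u) ((oplus u · x) '' I) J := by rw [hI.2 x hx]
    _ = image2 (oplus u) I ((oplus u x ·) '' J) := by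
        rw [image2_image_left, image2_image_right]
        exact image2_congr fun p hp q hq => oplus_assoc (hI0 p hp) (hJ0 q hq)
    _ = image2 (oplus u) I ((oplus u · x) '' J) := by rw [hJ.2 x hx]
    _ = (oplus u · x) '' image2 (oplus u) I J := by
        rw [image2_image_right, image_image2]
        exact image2_congr fun p hp _ _ => (oplus_assoc (hI0 p hp) hx.1).symm

lemma oplus_mem_setOplus (hI : IsNormalIdealIn u (Icc 0 u) I)
    (hJ : IsNormalIdealIn u (Icc 0 u) J) {s t : α} (hs : s ∈ setOplus u I J)
    (ht : t ∈ setOplus u I J) : oplus u s t ∈ setOplus u I J := by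
  obtain ⟨p₁, hp₁, q₁, hq₁, rfl⟩ := hs
  obtain ⟨p₂, hp₂, q₂, hq₂, rfl⟩ := ht
  have hp₁0 := (hI.1.1 hp₁).1
  have hq₁0 := (hJ.1.1 hq₁).1
  have hu := hp₁0.trans (hI.1.1 hp₁).2
  obtain ⟨p₃, hp₃, he⟩ : ∃ p₃ ∈ I, oplus u p₃ q₁ = oplus u q₁ p₂ :=
    (hI.2 q₁ (hJ.1.1 hq₁) ▸ mem_image_of_mem _ hp₂ :)
  refine ⟨oplus u p₁ p₃, hI.1.2.2.2 _ hp₁ _ hp₃, oplus u q₁ q₂, hJ.1.2.2.2 _ hq₁ _ hq₂, ?_⟩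
  have hq₂0 := (hJ.1.1 hq₂).1
  -- both sides reassociate to `(p₁ ⊕ (q₁ ⊕ p₂)) ⊕ q₂`
  rw [← oplus_assoc (oplus_mem_Icc hu hp₁0 (hI.1.1 hp₃).1).1 hq₂0,
    ← oplus_assoc (oplus_mem_Icc hu hp₁0 hq₁0).1 hq₂0, oplus_assoc hp₁0 (hI.1.1 hp₂).1,
    oplus_assoc hp₁0 hq₁0, he]

lemma isNormalIdealIn_inter_lowerClosure_setOplus (hI : IsNormalIdealIn u (Icc 0 u) I)
    (hJ : IsNormalIdealIn u (Icc 0 u) J) :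
    IsNormalIdealIn u (Icc 0 u) (Icc 0 u ∩ lowerClosure (setOplus u I J)) := by
  have h0I := hI.1.zero_mem
  have hu : 0 ≤ u := (hI.1.1 h0I).2
  refine ⟨isIdealIn_inter_lowerClosure ?_ ⟨_, mem_image2_of_mem h0I hJ.1.zero_mem⟩
    fun s hs t ht => oplus_mem_setOplus hI hJ hs ht, fun x hx => ?_⟩
  · rintro _ ⟨p, hp, q, hq, rfl⟩
    exact oplus_mem_Icc hu (hI.1.1 hp).1 (hJ.1.1 hq).1
  · exact image_oplus_inter_lowerClosure (fun y hy => image_oplus_setOplus hI hJ hy) hx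

lemma exists_le_add_of_normalGenIn_union_eq (hI : IsNormalIdealIn u (Icc 0 u) I)
    (hJ : IsNormalIdealIn u (Icc 0 u) J) (hgen : normalGenIn u (Icc 0 u) (I ∪ J) = Icc 0 u) :
    ∃ p ∈ I, ∃ q ∈ J, u ≤ p + q := by
  have hu : 0 ≤ u := (hI.1.1 hI.1.zero_mem).2
  have hsub : I ∪ J ⊆ Icc 0 u ∩ lowerClosure (setOplus u I J) := by
    rintro z (hz | hz)
    · exact ⟨hI.1.1 hz, _, mem_image2_of_mem hz hJ.1.zero_mem,
        le_inf (add_zero z).ge (hI.1.1 hz).2⟩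
    · exact ⟨hJ.1.1 hz, _, mem_image2_of_mem hI.1.zero_mem hz,
        le_inf (zero_add z).ge (hJ.1.1 hz).2⟩
  have hu_gen : u ∈ normalGenIn u (Icc 0 u) (I ∪ J) := hgen.symm ▸ ⟨hu, le_rfl⟩
  obtain ⟨-, _, ⟨p, hp, q, hq, rfl⟩, hle⟩ :=
    normalGenIn_subset (isNormalIdealIn_inter_lowerClosure_setOplus hI hJ) hsub hu_gen
  exact ⟨p, hp, q, hq, hle.trans inf_le_left⟩

end NormalIdealSum

theorem stmt11_general (u : G)
    (h : IsStronglyProjectableIn u (Set.Icc (0 : G) u)) :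
    ∀ a ∈ Set.Icc (0 : G) u, ∃ b : G, IsBooleanIn u (Set.Icc (0 : G) u) b ∧
      ∀ x ∈ Set.Icc (0 : G) u, (x ⊓ a = 0 ↔ x ≤ b) := by
  intro a ha
  obtain ⟨hI, J, hJ, hIJ, hgen⟩ := h _ (isPolarIdealIn_polarIn (singleton_subset_iff.mpr ha))
  obtain ⟨p, hp, q, hq, hpq⟩ := exists_le_add_of_normalGenIn_union_eq hI hJ hgen
  have hqu := (hJ.1.1 hq).2
  have hb : u - q ∈ polarIn (Icc 0 u) {a} :=
    hI.1.mem_of_le hp ⟨sub_nonneg.mpr hqu, sub_le_self u (hJ.1.1 hq).1⟩ (sub_le_iff_le_add.mpr hpq)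
  have hbq := hI.1.inf_eq_zero_of_inter_eq hJ.1 hIJ hb hq
  refine ⟨u - q, ⟨hI.1.1 hb, oplus_self_eq_of_add_eq (sub_add_cancel u q) hbq⟩,
    fun x hx => ⟨?_, ?_⟩⟩
  · intro hxa
    have hxI : x ∈ polarIn (Icc 0 u) {a} := mem_polarIn_singleton.mpr ⟨hx, hxa⟩
    exact le_sub_of_inf_eq_zero hx.2 hqu (hI.1.inf_eq_zero_of_inter_eq hJ.1 hIJ hxI hq)
  · intro hxb
    exact (mem_polarIn_singleton.mp (hI.1.mem_of_le hb hx hxb)).2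

theorem stmt11 (u : G) (hu : IsStrongUnit u)
    (h : IsStronglyProjectableIn u (Set.Icc (0 : G) u)) :
    ∀ a ∈ Set.Icc (0 : G) u, ∃ b : G, IsBooleanIn u (Set.Icc (0 : G) u) b ∧
      ∀ x ∈ Set.Icc (0 : G) u, (x ⊓ a = 0 ↔ x ≤ b) :=
  stmt11_general u h
end

section
/- Let N be a large subalgebra of the pseudo MV-algebra M = Γ(G,u), suppose both N and M are strongly projectable, and let I be a polar ideal of N. Then for a Boolean element a ∈ N: I = ↓_N a if and only if (I^{⊥_N})^{⊥_M} = ↓_M a. -/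
variable {G : Type*} [Lattice G] [AddGroup G]
  [CovariantClass G G (· + ·) (· ≤ ·)]
  [CovariantClass G G (Function.swap (· + ·)) (· ≤ ·)]

/-!
If `a` is Boolean then `a ⊓ a∼ = 0`, where `a∼ = -a + u`, and `a ⊕ y = a + (y ⊓ a∼)`, so
`y ≤ a` as soon as `y ⊓ a∼ = 0`. For `y ∈ ((↓_N a)^{⊥_N})^{⊥_M}`, the element `z = y ⊓ a∼` is
orthogonal both to `↓_N a` and to `(↓_N a)^{⊥_N}`; if `z ≠ 0`, largeness gives a nonzero `x ∈ N`
below a multiple of `z`, which then lies in `(↓_N a)^{⊥_N}` and is orthogonal to itself.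
Hence `z = 0` and `y ≤ a`. Conversely, a polar `I` of `N` is recovered from its double polar
taken in `M` as `I = I^{⊥_N ⊥_N} = N ∩ I^{⊥_N ⊥_M}`.
-/

section LatticeOrderedGroup

variable {α : Type*} [Lattice α] [AddGroup α]

theorem inf_eq_zero_of_le_of_inf_eq_zero {x w v : α} (hx : 0 ≤ x) (hw : 0 ≤ w) (hwv : w ≤ v)
    (h : x ⊓ v = 0) : x ⊓ w = 0 :=
  le_antisymm (h ▸ inf_le_inf_left x hwv) (le_inf hx hw)

variable [AddLeftMono α] [AddRightMono α]

theorem inf_add_eq_zero_of_inf_eq_zero {x p q : α} (hx : 0 ≤ x) (hp : 0 ≤ p) (hq : 0 ≤ q)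
    (hxp : x ⊓ p = 0) (hxq : x ⊓ q = 0) : x ⊓ (p + q) = 0 := by
  have hle : x ⊓ (p + q) ≤ x ⊓ p + x ⊓ q := by
    rw [add_inf, inf_add, inf_add]
    refine le_inf (le_inf ?_ ?_) (le_inf ?_ inf_le_right)
    · exact inf_le_left.trans (le_add_of_nonneg_right hx)
    · exact inf_le_left.trans (le_add_of_nonneg_left hp)
    · exact inf_le_left.trans (le_add_of_nonneg_right hq)
  rw [hxp, hxq, add_zero] at hle
  exact le_antisymm hle (le_inf hx (add_nonneg hp hq))

theorem inf_nsmul_eq_zero_of_inf_eq_zero {x z : α} (hx : 0 ≤ x) (hz : 0 ≤ z)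
    (h : x ⊓ z = 0) (n : ℕ) : x ⊓ n • z = 0 := by
  induction n with
  | zero => simpa using inf_eq_right.mpr hx
  | succ n ih =>
    rw [succ_nsmul]
    exact inf_add_eq_zero_of_inf_eq_zero hx (nsmul_nonneg hz n) hz ih h

theorem nOplus_le_nsmul (u z : α) (n : ℕ) : nOplus u n z ≤ n • z := by
  induction n with
  | zero => simp [nOplus]
  | succ n ih =>
    rw [succ_nsmul]
    exact inf_le_left.trans (add_le_add ih le_rfl)

end LatticeOrderedGroup

section Boolean

variable {α : Type*} [Lattice α] [AddGroup α] [AddLeftMono α]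

theorem oplus_eq_add_inf_neg_add (u a y : α) : oplus u a y = a + y ⊓ (-a + u) := by
  rw [add_inf, add_neg_cancel_left, oplus]

theorem inf_neg_add_eq_zero_of_oplus_self {u a : α} (h : oplus u a a = a) :
    a ⊓ (-a + u) = 0 := by
  rw [oplus_eq_add_inf_neg_add] at h
  exact add_eq_left.mp h

theorem le_of_inf_neg_add_eq_zero [AddRightMono α] {u a y : α} (ha : 0 ≤ a) (hyu : y ≤ u)
    (h : y ⊓ (-a + u) = 0) : y ≤ a :=
  calc y ≤ oplus u a y := le_inf (le_add_of_nonneg_left ha) hyu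
    _ = a := by rw [oplus_eq_add_inf_neg_add, h, add_zero]

end Boolean

section Polars

theorem dsetIn_eq_inter_of_subset {α : Type*} [Lattice α] {N C : Set α} (hNC : N ⊆ C)
    (a : α) : dsetIn N a = N ∩ dsetIn C a := by
  ext y
  exact ⟨fun ⟨hyN, hy⟩ => ⟨hyN, hNC hyN, hy⟩, fun ⟨hyN, _, hy⟩ => ⟨hyN, hy⟩⟩

variable {α : Type*} [Lattice α] [AddGroup α]

theorem polarIn_eq_inter_of_subset {N C : Set α} (hNC : N ⊆ C) (X : Set α) :
    polarIn N X = N ∩ polarIn C X := by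
  ext y
  exact ⟨fun ⟨hyN, hy⟩ => ⟨hyN, hNC hyN, hy⟩, fun ⟨hyN, _, hy⟩ => ⟨hyN, hy⟩⟩

theorem mem_polarIn_dsetIn {C N : Set α} {a z : α} (hN : ∀ x ∈ N, 0 ≤ x) (hzC : z ∈ C)
    (hz : 0 ≤ z) (hza : z ⊓ a = 0) : z ∈ polarIn C (dsetIn N a) :=
  ⟨hzC, fun x hx => inf_eq_zero_of_le_of_inf_eq_zero hz (hN x hx.1) hx.2 hza⟩

theorem mem_polarIn_Icc_of_le {u y z : α} {X : Set α} (hX : X ⊆ Set.Icc 0 u)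
    (hy : y ∈ polarIn (Set.Icc 0 u) X) (hz : 0 ≤ z) (hzy : z ≤ y) :
    z ∈ polarIn (Set.Icc 0 u) X :=
  ⟨⟨hz, hzy.trans hy.1.2⟩, fun x hx => by
    rw [inf_comm]
    exact inf_eq_zero_of_le_of_inf_eq_zero (hX hx).1 hz hzy (by rw [inf_comm, hy.2 x hx])⟩

end Polars

section LargeSubalgebra

variable {α : Type*} [Lattice α] [AddGroup α] [AddLeftMono α] [AddRightMono α]

theorem IsLargeSubalg.eq_zero_of_mem_polarIn_of_mem_polarIn_polarIn {u z : α} {N X : Set α}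
    (hN : IsLargeSubalg u N) (hX : X ⊆ Set.Icc 0 u) (hzX : z ∈ polarIn (Set.Icc 0 u) X)
    (hz : z ∈ polarIn (Set.Icc 0 u) (polarIn N X)) : z = 0 := by
  by_contra hz0
  obtain ⟨n, x, hxN, hx0, hxz⟩ := hN.2 z hzX.1 hz0
  have hx : 0 ≤ x := (hN.1.1 hxN).1
  have hxz : x ≤ n • z := hxz.trans (nOplus_le_nsmul u z n)
  have hx_perp {w : α} (hw : 0 ≤ w) (hzw : w ⊓ z = 0) : x ⊓ w = 0 := by
    rw [inf_comm]
    exact inf_eq_zero_of_le_of_inf_eq_zero hw hx hxz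
      (inf_nsmul_eq_zero_of_inf_eq_zero hw hzX.1.1 hzw n)
  have hxX : x ∈ polarIn N X :=
    ⟨hxN, fun w hw => hx_perp (hX hw).1 (by rw [inf_comm, hzX.2 w hw])⟩
  exact hx0 (by simpa using hx_perp hx (by rw [inf_comm, hz.2 x hxX]))

theorem IsLargeSubalg.polarIn_polarIn_dsetIn {u a : α} {N : Set α} (hN : IsLargeSubalg u N)
    (haN : a ∈ N) (ha : oplus u a a = a) :
    polarIn (Set.Icc 0 u) (polarIn N (dsetIn N a)) = dsetIn (Set.Icc 0 u) a := by
  have hNM : N ⊆ Set.Icc 0 u := hN.1.1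
  have hN0 : ∀ x ∈ N, 0 ≤ x := fun x hx => (hNM hx).1
  have haM := hNM haN
  apply subset_antisymm
  · intro y hy
    have hcompl : 0 ≤ -a + u := by simpa using add_le_add_left haM.2 (-a)
    set z := y ⊓ (-a + u)
    have hz : 0 ≤ z := le_inf hy.1.1 hcompl
    have hza : z ⊓ a = 0 := by
      rw [inf_comm]
      exact inf_eq_zero_of_le_of_inf_eq_zero haM.1 hz inf_le_right
        (inf_neg_add_eq_zero_of_oplus_self ha)
    have hz0 : z = 0 :=
      hN.eq_zero_of_mem_polarIn_of_mem_polarIn_polarIn (fun x hx => hNM hx.1)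
        (mem_polarIn_dsetIn hN0 ⟨hz, inf_le_left.trans hy.1.2⟩ hz hza)
        (mem_polarIn_Icc_of_le (fun x hx => hNM hx.1) hy hz inf_le_left)
    exact ⟨hy.1, le_of_inf_neg_add_eq_zero haM.1 hy.1.2 hz0⟩
  · intro y hy
    refine ⟨hy.1, fun x hx => ?_⟩
    rw [inf_comm]
    exact inf_eq_zero_of_le_of_inf_eq_zero (hN0 x hx.1) hy.1.1 hy.2 (hx.2 a ⟨haN, le_rfl⟩)

end LargeSubalgebra

theorem stmt17_general (u : G) (N : Set G)
    (hN : IsLargeSubalg u N)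
    (I : Set G) (hI : IsPolarIdealIn N I)
    (a : G) (haN : a ∈ N) (hbool : oplus u a a = a) :
    I = dsetIn N a ↔ polarIn (Set.Icc (0 : G) u) (polarIn N I) = dsetIn (Set.Icc (0 : G) u) a := by
  constructor
  · rintro rfl
    exact hN.polarIn_polarIn_dsetIn haN hbool
  · intro h
    rw [← hI, polarIn_eq_inter_of_subset hN.1.1, h, dsetIn_eq_inter_of_subset hN.1.1]

theorem stmt17 (u : G) (hu : IsStrongUnit u) (N : Set G)
    (hN : IsLargeSubalg u N)
    (hNsp : IsStronglyProjectableIn u N)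
    (hMsp : IsStronglyProjectableIn u (Set.Icc (0 : G) u))
    (I : Set G) (hI : IsPolarIdealIn N I)
    (a : G) (haN : a ∈ N) (hbool : oplus u a a = a) :
    I = dsetIn N a ↔ polarIn (Set.Icc (0 : G) u) (polarIn N I) = dsetIn (Set.Icc (0 : G) u) a :=
  stmt17_general u N hN I hI a haN hbool
end
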